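/- arXiv:0905.3463 — 6 statements merged into one kernel-verified Lean document; each statement's English description precedes it below -/
import Mathlib

section
/- Suppose σ_{y·zx} > 0 (i.e. R²_{y·zx} < 1), σ_{z·x} > 0, σ_{w·x} > 0, σ_{w·zx} > 0 and σ_{z·wx} > 0 (i.e. t_W is finite). Then the change in the Z-coefficient caused by omitting W satisfies b̂ − β̂ = SE(b̂) · t_W · ρ_{yw·zx}. -/
open scoped BigOperators

/-- Weighted inner product on ℝⁿ: `(A,B) := (∑ i, wᵢ Aᵢ Bᵢ) / (∑ i, wᵢ)`. -/
noncomputable def wip {n : ℕ} (w A B : Fin n → ℝ) : ℝ :=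
  (∑ i, w i * A i * B i) / (∑ i, w i)

/-- `P` is the best linear predictor (orthogonal projection with respect to the
weighted inner product `wip w`) of `A` onto the span of the collection `C`. -/
def IsBlp {n : ℕ} (w : Fin n → ℝ) (C : Set (Fin n → ℝ)) (A P : Fin n → ℝ) : Prop :=
  P ∈ Submodule.span ℝ C ∧ ∀ v ∈ Submodule.span ℝ C, wip w (A - P) v = 0

/-! The omitted-variable formula is the Frisch–Waugh–Lovell theorem in disguise. Writing
`r_z`, `r_w` for the residuals of `Z`, `W` on `X`, the coefficient of a regressor equals the
inner product of the response with that regressor's partial residual, divided by its squared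
length. This gives `b̂ σ²_{z·x} = (Y, r_z) = β̂ σ²_{z·x} + δ̂ σ_{wz·x}` and
`δ̂ σ²_{w·zx} = σ_{yw·zx}`, hence `(b̂ - β̂) σ²_{z·x} σ²_{w·zx} = σ_{wz·x} σ_{yw·zx}`.
The same computation yields the symmetric identity
`σ²_{z·x} σ²_{w·zx} = σ²_{w·x} σ²_{z·wx} = σ²_{z·x} σ²_{w·x} - σ_{wz·x}²`, which is exactly what
turns the right-hand side into `SE(b̂) · t_W · ρ_{yw·zx}`; `df > 0` because `Z ∉ span X` and
`W ∉ span (X, Z)`. -/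

open Submodule

lemma exists_sub_smul_mem_span_of_mem_span_insert {R M : Type*} [Ring R] [AddCommGroup M]
    [Module R M] {s : Set M} {x y : M} (h : x ∈ span R (insert y s)) :
    ∃ a : R, x - a • y ∈ span R s := by
  obtain ⟨a, ha⟩ := mem_span_insert'.mp h
  exact ⟨-a, by rwa [neg_smul, sub_neg_eq_add]⟩

section InnerProduct

variable {n : ℕ} {w : Fin n → ℝ}

lemma wip_comm (A B : Fin n → ℝ) : wip w A B = wip w B A := by
  simp only [wip, mul_right_comm]

lemma wip_sub_left (A B C : Fin n → ℝ) : wip w (A - B) C = wip w A C - wip w B C := by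
  simp only [wip, Pi.sub_apply, mul_sub, sub_mul, Finset.sum_sub_distrib, sub_div]

lemma wip_smul_left (r : ℝ) (A B : Fin n → ℝ) : wip w (r • A) B = r * wip w A B := by
  simp only [wip, Pi.smul_apply, smul_eq_mul, Finset.mul_sum, ← mul_div_assoc]
  exact congrArg (· / _) (Finset.sum_congr rfl fun _ _ ↦ by ring)

end InnerProduct

section Orthogonality

variable {n : ℕ} {w : Fin n → ℝ} {C : Set (Fin n → ℝ)}

lemma wip_eq_of_sub_mem_span {u u' v : Fin n → ℝ}
    (hv : ∀ x ∈ span ℝ C, wip w x v = 0) (h : u - u' ∈ span ℝ C) :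
    wip w u v = wip w u' v := by
  rw [← sub_eq_zero, ← wip_sub_left]
  exact hv _ h

lemma wip_eq_mul_of_sub_smul_mem_span {u z v : Fin n → ℝ} {g : ℝ}
    (hv : ∀ x ∈ span ℝ C, wip w x v = 0) (h : u - g • z ∈ span ℝ C) :
    wip w u v = g * wip w z v := by
  rw [wip_eq_of_sub_mem_span hv h, wip_smul_left]

end Orthogonality

namespace IsBlp

variable {n : ℕ} {w : Fin n → ℝ} {C : Set (Fin n → ℝ)}

lemma wip_residual_right {A P x : Fin n → ℝ} (hP : IsBlp w C A P) (hx : x ∈ span ℝ C) :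
    wip w x (A - P) = 0 := by
  rw [wip_comm]
  exact hP.2 x hx

lemma wip_eq_of_mem {A P v : Fin n → ℝ} (hP : IsBlp w C A P) (hv : v ∈ span ℝ C) :
    wip w A v = wip w P v := by
  rw [← sub_eq_zero, ← wip_sub_left]
  exact hP.2 v hv

lemma wip_residual_left_eq {A P v : Fin n → ℝ} (hP : IsBlp w C A P)
    (hv : ∀ x ∈ span ℝ C, wip w x v = 0) : wip w (A - P) v = wip w A v :=
  wip_eq_of_sub_mem_span hv (by rw [sub_sub_cancel_left]; exact neg_mem hP.1)

lemma wip_residual_eq {A P : Fin n → ℝ} (hP : IsBlp w C A P) :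
    wip w A (A - P) = wip w (A - P) (A - P) :=
  (hP.wip_residual_left_eq fun _ ↦ hP.wip_residual_right).symm

lemma notMem_span {A P : Fin n → ℝ} (hP : IsBlp w C A P) (hpos : 0 < wip w (A - P) (A - P)) :
    A ∉ span ℝ C :=
  fun hA ↦ hpos.ne' (hP.2 _ (sub_mem hA hP.1))

lemma residual_mem_span_insert {Z Pz : Fin n → ℝ} (hZ : IsBlp w C Z Pz) :
    Z - Pz ∈ span ℝ (insert Z C) :=
  sub_mem (subset_span (Set.mem_insert Z C)) (span_mono (Set.subset_insert Z C) hZ.1)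

/-- The Frisch–Waugh–Lovell theorem. -/
lemma coeff_mul_wip_residual {Z Pz A P : Fin n → ℝ} {g : ℝ} (hZ : IsBlp w C Z Pz)
    (hA : IsBlp w (insert Z C) A P) (hg : P - g • Z ∈ span ℝ C) :
    g * wip w (Z - Pz) (Z - Pz) = wip w A (Z - Pz) := by
  rw [← hZ.wip_residual_eq, hA.wip_eq_of_mem hZ.residual_mem_span_insert,
    wip_eq_mul_of_sub_smul_mem_span (fun _ ↦ hZ.wip_residual_right) hg]

lemma wip_residual_insert_self {Z Pz W Pw Pwz : Fin n → ℝ} {g : ℝ} (hZ : IsBlp w C Z Pz)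
    (hW : IsBlp w C W Pw) (hWZ : IsBlp w (insert Z C) W Pwz) (hg : Pwz - g • Z ∈ span ℝ C) :
    wip w (W - Pwz) (W - Pwz) = wip w (W - Pw) (W - Pw) - g * wip w (W - Pw) (Z - Pz) := by
  have hrw : W - Pwz - (W - Pw) ∈ span ℝ (insert Z C) := by
    rw [sub_sub_sub_cancel_left]
    exact sub_mem (span_mono (Set.subset_insert Z C) hW.1) hWZ.1
  have hrwz : W - Pwz - (W - g • Z) ∈ span ℝ C := by
    rw [sub_sub_sub_cancel_left, ← neg_sub]
    exact neg_mem hg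
  calc wip w (W - Pwz) (W - Pwz) = wip w (W - Pw) (W - Pwz) :=
        wip_eq_of_sub_mem_span (fun _ ↦ hWZ.wip_residual_right) hrw
    _ = wip w (W - g • Z) (W - Pw) := by
        rw [wip_comm, wip_eq_of_sub_mem_span (fun _ ↦ hW.wip_residual_right) hrwz]
    _ = wip w (W - Pw) (W - Pw) - g * wip w (W - Pw) (Z - Pz) := by
        rw [wip_sub_left, wip_smul_left, hW.wip_residual_eq,
          ← hZ.wip_residual_left_eq fun _ ↦ hW.wip_residual_right, wip_comm (Z - Pz)]

lemma mul_wip_residual_insert_comm {Z Pz W Pw Pwz Pzw : Fin n → ℝ} (hZ : IsBlp w C Z Pz)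
    (hW : IsBlp w C W Pw) (hWZ : IsBlp w (insert Z C) W Pwz) (hZW : IsBlp w (insert W C) Z Pzw) :
    wip w (Z - Pz) (Z - Pz) * wip w (W - Pwz) (W - Pwz) =
      wip w (W - Pw) (W - Pw) * wip w (Z - Pzw) (Z - Pzw) := by
  obtain ⟨g, hg⟩ := exists_sub_smul_mem_span_of_mem_span_insert hWZ.1
  obtain ⟨h, hh⟩ := exists_sub_smul_mem_span_of_mem_span_insert hZW.1
  have hga : g * wip w (Z - Pz) (Z - Pz) = wip w (W - Pw) (Z - Pz) := by
    rw [hZ.coeff_mul_wip_residual hWZ hg, hW.wip_residual_left_eq fun _ ↦ hZ.wip_residual_right]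
  have hhb : h * wip w (W - Pw) (W - Pw) = wip w (W - Pw) (Z - Pz) := by
    rw [hW.coeff_mul_wip_residual hZW hh, ← hZ.wip_residual_left_eq fun _ ↦ hW.wip_residual_right,
      wip_comm]
  rw [hZ.wip_residual_insert_self hW hWZ hg, hW.wip_residual_insert_self hZ hZW hh,
    wip_comm (Z - Pz) (W - Pw)]
  linear_combination (-wip w (W - Pw) (Z - Pz)) * hga + wip w (W - Pw) (Z - Pz) * hhb

lemma omitted_variable_bias {X : Set (Fin n → ℝ)} {Y Z W Pzx Pwx Pyzx Pwzx Pyzxw : Fin n → ℝ}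
    {bhat betahat deltahat : ℝ} (hPzx : IsBlp w X Z Pzx) (hPwx : IsBlp w X W Pwx)
    (hPyzx : IsBlp w (insert Z X) Y Pyzx) (hPwzx : IsBlp w (insert Z X) W Pwzx)
    (hPyzxw : IsBlp w (insert Z (insert W X)) Y Pyzxw) (hb : Pyzx - bhat • Z ∈ span ℝ X)
    (hbeta : Pyzxw - betahat • Z - deltahat • W ∈ span ℝ X) :
    (bhat - betahat) * (wip w (Z - Pzx) (Z - Pzx) * wip w (W - Pwzx) (W - Pwzx)) =
      wip w (W - Pwx) (Z - Pzx) * wip w (Y - Pyzx) (W - Pwzx) := by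
  have hshort : bhat * wip w (Z - Pzx) (Z - Pzx) = wip w Y (Z - Pzx) :=
    hPzx.coeff_mul_wip_residual hPyzx hb
  have hlong : wip w Y (Z - Pzx) =
      betahat * wip w (Z - Pzx) (Z - Pzx) + deltahat * wip w (W - Pwx) (Z - Pzx) := by
    have hrz : Z - Pzx ∈ span ℝ (insert Z (insert W X)) :=
      span_mono (Set.insert_subset_insert (Set.subset_insert W X)) hPzx.residual_mem_span_insert
    calc wip w Y (Z - Pzx) = wip w Pyzxw (Z - Pzx) := hPyzxw.wip_eq_of_mem hrz
      _ = wip w (Pyzxw - deltahat • W) (Z - Pzx) + deltahat * wip w W (Z - Pzx) := by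
          rw [wip_sub_left, wip_smul_left]; ring
      _ = betahat * wip w (Z - Pzx) (Z - Pzx) + deltahat * wip w (W - Pwx) (Z - Pzx) := by
          rw [wip_eq_mul_of_sub_smul_mem_span (fun _ ↦ hPzx.wip_residual_right)
              (by rwa [sub_right_comm]), hPzx.wip_residual_eq,
            hPwx.wip_residual_left_eq fun _ ↦ hPzx.wip_residual_right]
  have hdelta : deltahat * wip w (W - Pwzx) (W - Pwzx) = wip w (Y - Pyzx) (W - Pwzx) := by
    have hY : IsBlp w (insert W (insert Z X)) Y Pyzxw := by rwa [Set.insert_comm]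
    have hg : Pyzxw - deltahat • W ∈ span ℝ (insert Z X) :=
      mem_span_insert'.mpr ⟨-betahat, by rwa [neg_smul, ← sub_eq_add_neg, sub_right_comm]⟩
    rw [hPwzx.coeff_mul_wip_residual hY hg,
      hPyzx.wip_residual_left_eq fun _ ↦ hPwzx.wip_residual_right]
  linear_combination wip w (W - Pwzx) (W - Pwzx) * (hshort.trans hlong) +
    wip w (W - Pwx) (Z - Pzx) * hdelta

end IsBlp

section Dimension

variable {K V : Type*} [DivisionRing K] [AddCommGroup V] [Module K V] [FiniteDimensional K V]

lemma finrank_span_lt_finrank_span_insert {s : Set V} {x : V} (hx : x ∉ span K s) :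
    Module.finrank K (span K s) < Module.finrank K (span K (insert x s)) :=
  finrank_lt_finrank_of_lt <| SetLike.lt_iff_le_and_exists.mpr
    ⟨span_mono (Set.subset_insert x s), x, subset_span (Set.mem_insert x s), hx⟩

lemma finrank_span_add_two_le {s : Set V} {x y : V} (hx : x ∉ span K s)
    (hy : y ∉ span K (insert x s)) : Module.finrank K (span K s) + 2 ≤ Module.finrank K V := by
  have := finrank_span_lt_finrank_span_insert hx
  have := finrank_span_lt_finrank_span_insert hy
  have := (span K (insert y (insert x s))).finrank_le
  omega

end Dimension

lemma eq_se_mul_tstat_mul_corr {x A a b B D c d df : ℝ} (hA : 0 < A) (ha : 0 < a) (hb : 0 < b)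
    (hB : 0 < B) (hdf : 0 < df) (hBD : a * B = b * D) (hx : x * (a * B) = c * d) :
    x = √A / (√df * √a) * ((c / b) / (√D / (√df * √b))) * (d / (√A * √B)) := by
  have hD : √D = √a * √B / √b := by
    rw [← Real.sqrt_mul ha.le, ← Real.sqrt_div' _ hb.le, hBD, mul_div_cancel_left₀ _ hb.ne']
  rw [hD]
  field_simp
  rw [Real.sq_sqrt ha.le, Real.sq_sqrt hb.le, Real.sq_sqrt hB.le]
  linear_combination b * hx

theorem stmt0_general {n : ℕ} (w : Fin n → ℝ)
    (X : Set (Fin n → ℝ))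
    (Y Z W : Fin n → ℝ)
    (Pzx Pwx Pyzx Pwzx Pzwx Pyzxw : Fin n → ℝ)
    (hPzx : IsBlp w X Z Pzx)
    (hPwx : IsBlp w X W Pwx)
    (hPyzx : IsBlp w (insert Z X) Y Pyzx)
    (hPwzx : IsBlp w (insert Z X) W Pwzx)
    (hPzwx : IsBlp w (insert W X) Z Pzwx)
    (hPyzxw : IsBlp w (insert Z (insert W X)) Y Pyzxw)
    (bhat betahat deltahat : ℝ)
    (hb : Pyzx - bhat • Z ∈ Submodule.span ℝ X)
    (hbeta : Pyzxw - betahat • Z - deltahat • W ∈ Submodule.span ℝ X)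
    (hσyzx : 0 < wip w (Y - Pyzx) (Y - Pyzx))
    (hσzx : 0 < wip w (Z - Pzx) (Z - Pzx))
    (hσwx : 0 < wip w (W - Pwx) (W - Pwx))
    (hσwzx : 0 < wip w (W - Pwzx) (W - Pwzx)) :
    let df : ℝ := (n : ℝ) - (Module.finrank ℝ (Submodule.span ℝ X) : ℝ) - 1
    let σyzx := Real.sqrt (wip w (Y - Pyzx) (Y - Pyzx))
    let σzx := Real.sqrt (wip w (Z - Pzx) (Z - Pzx))
    let σwx := Real.sqrt (wip w (W - Pwx) (W - Pwx))
    let σwzx := Real.sqrt (wip w (W - Pwzx) (W - Pwzx))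
    let σzwx := Real.sqrt (wip w (Z - Pzwx) (Z - Pzwx))
    let SEb := σyzx / (Real.sqrt df * σzx)
    let tW := (wip w (W - Pwx) (Z - Pzx) / wip w (W - Pwx) (W - Pwx)) /
      (σzwx / (Real.sqrt df * σwx))
    let ρ := wip w (Y - Pyzx) (W - Pwzx) / (σyzx * σwzx)
    bhat - betahat = SEb * tW * ρ := by
  have hdim : Module.finrank ℝ (span ℝ X) + 2 ≤ n := by
    simpa using finrank_span_add_two_le (hPzx.notMem_span hσzx) (hPwzx.notMem_span hσwzx)
  have hdf : (0 : ℝ) < n - Module.finrank ℝ (span ℝ X) - 1 := by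
    have : (Module.finrank ℝ (span ℝ X) : ℝ) + 2 ≤ n := by exact_mod_cast hdim
    linarith
  exact eq_se_mul_tstat_mul_corr hσyzx hσzx hσwx hσwzx hdf
    (hPzx.mul_wip_residual_insert_comm hPwx hPwzx hPzwx)
    (hPzx.omitted_variable_bias hPwx hPyzx hPwzx hPyzxw hb hbeta)

/-- Proposition 1 of Hosman–Hansen–Holland: if
`σ_{y·zx} > 0`, `σ_{z·x} > 0`, `σ_{w·x} > 0`, `σ_{w·zx} > 0` and `σ_{z·wx} > 0`,
then `b̂ − β̂ = SE(b̂) · t_W · ρ_{yw·zx}`. -/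
theorem stmt0 {n : ℕ} (w : Fin n → ℝ) (hw : ∀ i, 0 < w i)
    (X : Set (Fin n → ℝ)) (hXfin : X.Finite)
    (h1 : (fun _ => (1 : ℝ)) ∈ Submodule.span ℝ X)
    (Y Z W : Fin n → ℝ)
    (Pzx Pwx Pyzx Pwzx Pzwx Pyzxw : Fin n → ℝ)
    (hPzx : IsBlp w X Z Pzx)
    (hPwx : IsBlp w X W Pwx)
    (hPyzx : IsBlp w (insert Z X) Y Pyzx)
    (hPwzx : IsBlp w (insert Z X) W Pwzx)
    (hPzwx : IsBlp w (insert W X) Z Pzwx)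
    (hPyzxw : IsBlp w (insert Z (insert W X)) Y Pyzxw)
    (bhat betahat deltahat : ℝ)
    (hb : Pyzx - bhat • Z ∈ Submodule.span ℝ X)
    (hbeta : Pyzxw - betahat • Z - deltahat • W ∈ Submodule.span ℝ X)
    (hσyzx : 0 < wip w (Y - Pyzx) (Y - Pyzx))
    (hσzx : 0 < wip w (Z - Pzx) (Z - Pzx))
    (hσwx : 0 < wip w (W - Pwx) (W - Pwx))
    (hσwzx : 0 < wip w (W - Pwzx) (W - Pwzx))
    (hσzwx : 0 < wip w (Z - Pzwx) (Z - Pzwx)) :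
    let df : ℝ := (n : ℝ) - (Module.finrank ℝ (Submodule.span ℝ X) : ℝ) - 1
    let σyzx := Real.sqrt (wip w (Y - Pyzx) (Y - Pyzx))
    let σzx := Real.sqrt (wip w (Z - Pzx) (Z - Pzx))
    let σwx := Real.sqrt (wip w (W - Pwx) (W - Pwx))
    let σwzx := Real.sqrt (wip w (W - Pwzx) (W - Pwzx))
    let σzwx := Real.sqrt (wip w (Z - Pzwx) (Z - Pzwx))
    let SEb := σyzx / (Real.sqrt df * σzx)
    let tW := (wip w (W - Pwx) (Z - Pzx) / wip w (W - Pwx) (W - Pwx)) /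
      (σzwx / (Real.sqrt df * σwx))
    let ρ := wip w (Y - Pyzx) (W - Pwzx) / (σyzx * σwzx)
    bhat - betahat = SEb * tW * ρ :=
  stmt0_general w X Y Z W Pzx Pwx Pyzx Pwzx Pzwx Pyzxw hPzx hPwx hPyzx hPwzx hPzwx hPyzxw bhat
    betahat deltahat hb hbeta hσyzx hσzx hσwx hσwzx
end

section
/- For any vectors Z, W ∈ ℝⁿ and any finite collection X of vectors in ℝⁿ, the residual-variance identity σ²_{z·x} · σ²_{w·zx} = σ²_{w·x} · σ²_{z·wx} holds, where σ²_{w·zx} uses the projection onto span(Z, X) and σ²_{z·wx} uses the projection onto span(W, X). -/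
/-!
Write `e_z = Z - blp(Z|X)` and `e_w = W - blp(W|X)`. Any residual of `W` on `span(Z, X)` has the
form `e_w - a • e_z + r` with `r ∈ span X`; orthogonality to `e_z` forces
`a σ²_{z·x} = (e_z, e_w)`, and then
`σ²_{z·x} σ²_{w·zx} = σ²_{z·x} σ²_{w·x} - (e_z, e_w)²`.
The right-hand side is symmetric in `Z` and `W`.
-/

open scoped BigOperators

namespace LinearMap.BilinForm

open Submodule

variable {R M : Type*} [CommRing R] [AddCommGroup M] [Module R M] {B : LinearMap.BilinForm R M}

theorem IsSymm.mul_residual_insert (hB : B.IsSymm) {s : Set M} {z y pz py p : M}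
    (hpz : pz ∈ span R s) (hz : ∀ v ∈ span R s, B (z - pz) v = 0)
    (hpy : py ∈ span R s) (hy : ∀ v ∈ span R s, B (y - py) v = 0)
    (hp : p ∈ span R (insert z s)) (he : ∀ v ∈ span R (insert z s), B (y - p) v = 0) :
    B (z - pz) (z - pz) * B (y - p) (y - p)
      = B (z - pz) (z - pz) * B (y - py) (y - py) - B (z - pz) (y - py) ^ 2 := by
  have hle : span R s ≤ span R (insert z s) := span_mono (Set.subset_insert z s)
  have hz_mem : z ∈ span R (insert z s) := subset_span (Set.mem_insert z s)
  set ez := z - pz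
  set ey := y - py
  set e := y - p
  have h_ez : B e ez = 0 := he _ (sub_mem hz_mem (hle hpz))
  have h_ee : B e e = B e ey :=
    calc B e e = B e (ey + (py - p)) := by congr 1; simp only [e, ey]; abel
      _ = B e ey := by rw [map_add, he _ (sub_mem (hle hpy) hp), add_zero]
  obtain ⟨a, k, hk, rfl⟩ := mem_span_insert.1 hp
  obtain ⟨r, hr, he_eq⟩ : ∃ r ∈ span R s, e = ey - a • ez + r :=
    ⟨py - a • pz - k, sub_mem (sub_mem hpy (smul_mem _ a hpz)) hk, by
      simp only [e, ez, ey]; module⟩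
  have h_e_apply (v : M) (hv : B v r = 0) : B e v = B ey v - a * B ez v := by
    rw [he_eq, map_add₂, map_sub₂, map_smul₂, smul_eq_mul, hB.eq r, hv, add_zero]
  have h_cov : a * B ez ez = B ez ey := by
    have := h_e_apply ez (hz r hr); rw [h_ez, hB.eq ey] at this; linear_combination this
  rw [h_ee, h_e_apply ey (hy r hr)]
  linear_combination -(B ez ey) * h_cov

end LinearMap.BilinForm

noncomputable def wipForm {n : ℕ} (w : Fin n → ℝ) : LinearMap.BilinForm ℝ (Fin n → ℝ) :=
  LinearMap.mk₂ ℝ (wip w)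
    (fun A A' B => by
      simp only [wip, Pi.add_apply, mul_add, add_mul, Finset.sum_add_distrib, add_div])
    (fun c A B => by
      simp only [wip, Pi.smul_apply, smul_eq_mul, Finset.mul_sum, mul_div_assoc']
      exact congrArg (· / _) (Finset.sum_congr rfl fun i _ => by ring))
    (fun A B B' => by
      simp only [wip, Pi.add_apply, mul_add, Finset.sum_add_distrib, add_div])
    (fun c A B => by
      simp only [wip, Pi.smul_apply, smul_eq_mul, Finset.mul_sum, mul_div_assoc']
      exact congrArg (· / _) (Finset.sum_congr rfl fun i _ => by ring))

theorem wipForm_apply {n : ℕ} (w A B : Fin n → ℝ) : wipForm w A B = wip w A B := rfl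

theorem wipForm_isSymm {n : ℕ} (w : Fin n → ℝ) : (wipForm w).IsSymm :=
  ⟨fun A B => by simp only [wipForm_apply, wip, mul_right_comm _ (A _)]⟩

theorem stmt2_general {n : ℕ} (w : Fin n → ℝ)
    (X : Set (Fin n → ℝ))
    (Z W : Fin n → ℝ)
    (Pzx Pwx Pwzx Pzwx : Fin n → ℝ)
    (hPzx : IsBlp w X Z Pzx)
    (hPwx : IsBlp w X W Pwx)
    (hPwzx : IsBlp w (insert Z X) W Pwzx)
    (hPzwx : IsBlp w (insert W X) Z Pzwx) :
    wip w (Z - Pzx) (Z - Pzx) * wip w (W - Pwzx) (W - Pwzx)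
      = wip w (W - Pwx) (W - Pwx) * wip w (Z - Pzwx) (Z - Pzwx) := by
  have hB := wipForm_isSymm w
  have hZW := hB.mul_residual_insert hPzx.1 hPzx.2 hPwx.1 hPwx.2 hPwzx.1 hPwzx.2
  have hWZ := hB.mul_residual_insert hPwx.1 hPwx.2 hPzx.1 hPzx.2 hPzwx.1 hPzwx.2
  rw [hB.eq (W - Pwx) (Z - Pzx)] at hWZ
  simp only [wipForm_apply] at hZW hWZ
  linear_combination hZW - hWZ

/-- for any vectors `Z, W ∈ ℝⁿ` and any finite collection `X` of
vectors in ℝⁿ, the residual-variance identity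
`σ²_{z·x} · σ²_{w·zx} = σ²_{w·x} · σ²_{z·wx}` holds. -/
theorem stmt2 {n : ℕ} (w : Fin n → ℝ) (hw : ∀ i, 0 < w i)
    (X : Set (Fin n → ℝ)) (hXfin : X.Finite)
    (Z W : Fin n → ℝ)
    (Pzx Pwx Pwzx Pzwx : Fin n → ℝ)
    (hPzx : IsBlp w X Z Pzx)
    (hPwx : IsBlp w X W Pwx)
    (hPwzx : IsBlp w (insert Z X) W Pwzx)
    (hPzwx : IsBlp w (insert W X) Z Pzwx) :
    wip w (Z - Pzx) (Z - Pzx) * wip w (W - Pwzx) (W - Pwzx)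
      = wip w (W - Pwx) (W - Pwx) * wip w (Z - Pzwx) (Z - Pzwx) :=
  stmt2_general w X Z W Pzx Pwx Pwzx Pzwx hPzx hPwx hPwzx hPzwx
end

section
/- Let d > 1 be real, q > 0, T ≥ 0, and set f(t,d) := √(1 + (1 + t²)/(d − 1)). Then for every t with |t| ≤ T and every ρ with |ρ| ≤ 1, both endpoints −tρ − q f(t,d)√(1 − ρ²) and −tρ + q f(t,d)√(1 − ρ²) lie in the interval [−√(T² + q² f(T,d)²), √(T² + q² f(T,d)²)]. Consequently, the interval with these endpoints is contained in [−√(T² + q² f(T,d)²), √(T² + q² f(T,d)²)]. -/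
/-! The endpoints are `a ρ + b √(1 - ρ²)` with `a = -t`, `b = ∓ q f(t)`. Since `(ρ, √(1 - ρ²))` is a
unit vector, Cauchy–Schwarz bounds them in absolute value by `√(t² + q² f(t)²)`, and this is
monotone in `t²`, hence at most `√(T² + q² f(T)²)` when `|t| ≤ T`. -/

open Real

lemma abs_mul_add_mul_sqrt_one_sub_sq_le (a b ρ : ℝ) (hρ : |ρ| ≤ 1) :
    |a * ρ + b * √(1 - ρ ^ 2)| ≤ √(a ^ 2 + b ^ 2) := by
  have hρ2 : ρ ^ 2 ≤ 1 := (sq_le_one_iff_abs_le_one ρ).mpr hρ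
  have hs : √(1 - ρ ^ 2) ^ 2 = 1 - ρ ^ 2 := sq_sqrt (by linarith)
  apply abs_le_sqrt
  nlinarith [sq_nonneg (a * √(1 - ρ ^ 2) - b * ρ)]

lemma sqrt_one_add_one_add_sq_div_le {c t T : ℝ} (hc : 0 ≤ c) (ht : |t| ≤ T) :
    √(1 + (1 + t ^ 2) / c) ≤ √(1 + (1 + T ^ 2) / c) := by
  have : t ^ 2 ≤ T ^ 2 := sq_le_sq.mpr (ht.trans (le_abs_self T))
  gcongr

lemma sqrt_sq_add_mul_sq_le {t T u v : ℝ} (q : ℝ) (ht : |t| ≤ T) (hu : 0 ≤ u) (huv : u ≤ v) :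
    √(t ^ 2 + (q * u) ^ 2) ≤ √(T ^ 2 + q ^ 2 * v ^ 2) := by
  have : t ^ 2 ≤ T ^ 2 := sq_le_sq.mpr (ht.trans (le_abs_self T))
  rw [mul_pow]
  gcongr

theorem stmt6_general (d q T : ℝ) (hd : 1 < d) :
    ∀ t ρ : ℝ, |t| ≤ T → |ρ| ≤ 1 →
      let f : ℝ → ℝ := fun s => Real.sqrt (1 + (1 + s ^ 2) / (d - 1))
      let M := Real.sqrt (T ^ 2 + q ^ 2 * f T ^ 2)
      (-t * ρ - q * f t * Real.sqrt (1 - ρ ^ 2)) ∈ Set.Icc (-M) M ∧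
      (-t * ρ + q * f t * Real.sqrt (1 - ρ ^ 2)) ∈ Set.Icc (-M) M ∧
      Set.Icc (-t * ρ - q * f t * Real.sqrt (1 - ρ ^ 2))
          (-t * ρ + q * f t * Real.sqrt (1 - ρ ^ 2)) ⊆ Set.Icc (-M) M := by
  intro t ρ ht hρ f M
  have habs : ∀ b, (b * f t) ^ 2 = (q * f t) ^ 2 → |-t * ρ + b * f t * √(1 - ρ ^ 2)| ≤ M := by
    intro b hb
    calc |-t * ρ + b * f t * √(1 - ρ ^ 2)| ≤ √((-t) ^ 2 + (b * f t) ^ 2) :=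
          abs_mul_add_mul_sqrt_one_sub_sq_le _ _ ρ hρ
      _ = √(t ^ 2 + (q * f t) ^ 2) := by rw [neg_sq, hb]
      _ ≤ M := sqrt_sq_add_mul_sq_le q ht (sqrt_nonneg _)
          (sqrt_one_add_one_add_sq_div_le (by linarith) ht)
  have hlow : -t * ρ - q * f t * √(1 - ρ ^ 2) ∈ Set.Icc (-M) M := by
    have h := habs (-q) (by ring)
    rw [neg_mul q, neg_mul (q * f t), ← sub_eq_add_neg] at h
    exact abs_le.mp h
  have hupp : -t * ρ + q * f t * √(1 - ρ ^ 2) ∈ Set.Icc (-M) M := abs_le.mp (habs q rfl)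
  exact ⟨hlow, hupp, Set.Icc_subset_Icc hlow.1 hupp.2⟩

/-- for real `d > 1`, `q > 0`, `T ≥ 0` and
`f(t,d) := √(1 + (1 + t²)/(d − 1))`, whenever `|t| ≤ T` and `|ρ| ≤ 1`, both endpoints
`−tρ ∓ q f(t,d)√(1 − ρ²)` lie in `[−√(T² + q² f(T,d)²), √(T² + q² f(T,d)²)]`;
consequently the interval with these endpoints is contained in that interval. -/
theorem stmt6 (d q T : ℝ) (hd : 1 < d) (hq : 0 < q) (hT : 0 ≤ T) :
    ∀ t ρ : ℝ, |t| ≤ T → |ρ| ≤ 1 →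
      let f : ℝ → ℝ := fun s => Real.sqrt (1 + (1 + s ^ 2) / (d - 1))
      let M := Real.sqrt (T ^ 2 + q ^ 2 * f T ^ 2)
      (-t * ρ - q * f t * Real.sqrt (1 - ρ ^ 2)) ∈ Set.Icc (-M) M ∧
      (-t * ρ + q * f t * Real.sqrt (1 - ρ ^ 2)) ∈ Set.Icc (-M) M ∧
      Set.Icc (-t * ρ - q * f t * Real.sqrt (1 - ρ ^ 2))
          (-t * ρ + q * f t * Real.sqrt (1 - ρ ^ 2)) ⊆ Set.Icc (-M) M :=
  stmt6_general d q T hd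
end

section
/- Let d > 1 be real, q > 0, T > 0, and set f(t,d) := √(1 + (1 + t²)/(d − 1)). Suppose 0 < R < T²/(T² + q² f(T,d)²). Then for every t with |t| ≤ T and every ρ with ρ² ≤ R, both −tρ − q f(t,d)√(1 − ρ²) and −tρ + q f(t,d)√(1 − ρ²) lie in the interval [−(T√R + q f(T,d)√(1 − R)), T√R + q f(T,d)√(1 − R)]. -/
private lemma key_ineq (T b x y u v : ℝ) (hT : 0 < T) (hb : 0 < b)
    (hx0 : 0 ≤ x) (hxy : x ≤ y) (hu0 : 0 ≤ u) (hv0 : 0 < v) (huv : v ≤ u)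
    (hid : u ^ 2 - v ^ 2 = y ^ 2 - x ^ 2) (hbyTv : b * y ≤ T * v) :
    T * x + b * u ≤ T * y + b * v := by
  have hxb : b * x ≤ b * y := mul_le_mul_of_nonneg_left hxy hb.le
  have hvu : T * v ≤ T * u := mul_le_mul_of_nonneg_left huv hT.le
  have h2 : 0 ≤ (y - x) * (T * (u + v) - b * (x + y)) :=
    mul_nonneg (by linarith) (by linarith)
  have h3 : 0 ≤ (T * (y - x) - b * (u - v)) * (u + v) := by nlinarith [h2, hid]
  have huvpos : 0 < u + v := by linarith
  nlinarith [h3, huvpos]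

private lemma sq_le_of_prod (b y T v : ℝ) (hby : 0 ≤ b * y) (hTv : 0 < T * v)
    (h : (b * y) ^ 2 ≤ (T * v) ^ 2) : b * y ≤ T * v := by
  nlinarith [h, hby, hTv]

private lemma R_lt_one (R A B : ℝ) (h : R * (A + B) < A) (hA : 0 < A)
    (hB : 0 ≤ B) (hR : 0 < R) : R < 1 := by nlinarith

/-- for real `d > 1`, `q > 0`, `T > 0`,
`f(t,d) := √(1 + (1 + t²)/(d − 1))` and `0 < R < T²/(T² + q² f(T,d)²)`, whenever
`|t| ≤ T` and `ρ² ≤ R`, both endpoints `−tρ ∓ q f(t,d)√(1 − ρ²)` lie in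
`[−(T√R + q f(T,d)√(1 − R)), T√R + q f(T,d)√(1 − R)]`. -/
theorem stmt7 (d q T R : ℝ) (hd : 1 < d) (hq : 0 < q) (hT : 0 < T)
    (hR0 : 0 < R)
    (hR1 : R < T ^ 2 /
      (T ^ 2 + q ^ 2 * Real.sqrt (1 + (1 + T ^ 2) / (d - 1)) ^ 2)) :
    ∀ t ρ : ℝ, |t| ≤ T → ρ ^ 2 ≤ R →
      let f : ℝ → ℝ := fun s => Real.sqrt (1 + (1 + s ^ 2) / (d - 1))
      let L := T * Real.sqrt R + q * f T * Real.sqrt (1 - R)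
      (-t * ρ - q * f t * Real.sqrt (1 - ρ ^ 2)) ∈ Set.Icc (-L) L ∧
      (-t * ρ + q * f t * Real.sqrt (1 - ρ ^ 2)) ∈ Set.Icc (-L) L := by
  intro t ρ ht hρ
  dsimp only
  have hd1 : (0:ℝ) < d - 1 := by linarith
  set fT := Real.sqrt (1 + (1 + T ^ 2) / (d - 1)) with hfT
  set ft := Real.sqrt (1 + (1 + t ^ 2) / (d - 1)) with hft
  have hfTarg : (0:ℝ) ≤ 1 + (1 + T ^ 2) / (d - 1) := by positivity
  have hfT2 : fT ^ 2 = 1 + (1 + T ^ 2) / (d - 1) := Real.sq_sqrt hfTarg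
  have hfTpos : 0 < fT := Real.sqrt_pos.2 (by positivity)
  have habs := abs_le.mp ht
  have ht2 : t ^ 2 ≤ T ^ 2 := sq_le_sq' (by linarith) habs.2
  have hftle : ft ≤ fT := by
    apply Real.sqrt_le_sqrt
    have h : (1 + t ^ 2) / (d - 1) ≤ (1 + T ^ 2) / (d - 1) :=
      div_le_div_of_nonneg_right (by linarith) hd1.le
    linarith
  have hftnn : 0 ≤ ft := Real.sqrt_nonneg _
  set b := q * fT with hb
  have hbpos : 0 < b := mul_pos hq hfTpos
  have hden : 0 < T ^ 2 + q ^ 2 * fT ^ 2 := by positivity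
  have hR1' : R * (T ^ 2 + b ^ 2) < T ^ 2 := by
    rw [show b ^ 2 = q ^ 2 * fT ^ 2 from by rw [hb]; ring]
    exact (lt_div_iff₀ hden).mp hR1
  have hRlt1 : R < 1 := R_lt_one R (T ^ 2) (b ^ 2) hR1' (by positivity) (sq_nonneg b) hR0
  set x := |ρ| with hx
  set y := Real.sqrt R with hy
  set u := Real.sqrt (1 - ρ ^ 2) with hu
  set v := Real.sqrt (1 - R) with hv
  have hy2 : y ^ 2 = R := Real.sq_sqrt hR0.le
  have hρ1 : ρ ^ 2 ≤ 1 := hρ.trans hRlt1.le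
  have hu2 : u ^ 2 = 1 - ρ ^ 2 := Real.sq_sqrt (by linarith)
  have hv2 : v ^ 2 = 1 - R := Real.sq_sqrt (by linarith)
  have hx2 : x ^ 2 = ρ ^ 2 := sq_abs ρ
  have hxy : x ≤ y := by
    rw [hx, hy, show |ρ| = Real.sqrt (ρ ^ 2) from (Real.sqrt_sq_eq_abs ρ).symm]
    exact Real.sqrt_le_sqrt hρ
  have hx0 : 0 ≤ x := abs_nonneg ρ
  have hy0 : 0 ≤ y := Real.sqrt_nonneg _
  have hu0 : 0 ≤ u := Real.sqrt_nonneg _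
  have hv0 : 0 < v := Real.sqrt_pos.2 (by linarith)
  have huv : v ≤ u := Real.sqrt_le_sqrt (by linarith)
  have hbyTv : b * y ≤ T * v := by
    apply sq_le_of_prod _ _ _ _ (mul_nonneg hbpos.le hy0) (mul_pos hT hv0)
    have e1 : (b * y) ^ 2 = b ^ 2 * R := by rw [mul_pow, hy2]
    have e2 : (T * v) ^ 2 = T ^ 2 * (1 - R) := by rw [mul_pow, hv2]
    rw [e1, e2]; linarith
  have hid : u ^ 2 - v ^ 2 = y ^ 2 - x ^ 2 := by rw [hu2, hv2, hy2, hx2]; ring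
  have hkey : T * x + b * u ≤ T * y + b * v :=
    key_ineq T b x y u v hT hbpos hx0 hxy hu0 hv0 huv hid hbyTv
  have htρ : |t * ρ| ≤ T * x := by
    rw [abs_mul]
    exact mul_le_mul_of_nonneg_right ht hx0
  have hc : q * ft * u ≤ b * u :=
    mul_le_mul_of_nonneg_right (mul_le_mul_of_nonneg_left hftle hq.le) hu0
  have hcnn : 0 ≤ q * ft * u := by positivity
  have habs2 := abs_le.mp htρ
  refine ⟨Set.mem_Icc.mpr ⟨?_, ?_⟩, Set.mem_Icc.mpr ⟨?_, ?_⟩⟩ <;>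
    linarith [habs2.1, habs2.2, hc, hcnn, hkey]
end

section
/- Let W be an n×k matrix of rank k > 1; suppose σ_{y·zx} > 0, σ_{z·x} > 0, σ_{z·xw} > 0, df − k > 0, and t_W² is finite. With t_W := √(k·df/(df + 1 − k) · F_W), F_W := [(σ²_{z·x} − σ²_{z·xw})/k]/[σ²_{z·xw}/(df + 1 − k)], ρ²_{yw·zx} := 1 − σ²_{y·zxw}/σ²_{y·zx}, V̂(b̂) := df^{−1}σ²_{y·zx}/σ²_{z·x}, and V̂(β̂) := (df − k)^{−1}σ²_{y·zxw}/σ²_{z·xw}, the estimated variances satisfy V̂(β̂) = V̂(b̂) · [1 + (k + t_W²)/(df − k)] · (1 − ρ²_{yw·zx}). -/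
open scoped BigOperators

lemma wip_self_nonneg {n : ℕ} (w A : Fin n → ℝ) (hw : ∀ i, 0 < w i) :
    0 ≤ wip w A A := by
  apply div_nonneg
  · apply Finset.sum_nonneg
    intro i _
    have h1 := (hw i).le
    nlinarith [mul_self_nonneg (A i)]
  · exact Finset.sum_nonneg fun i _ => (hw i).le

lemma wip_add_expand {n : ℕ} (w A B : Fin n → ℝ) :
    wip w (A + B) (A + B) = wip w A A + 2 * wip w A B + wip w B B := by
  have h : ∑ i, w i * (A + B) i * (A + B) i
      = (∑ i, w i * A i * A i) + 2 * (∑ i, w i * A i * B i) + ∑ i, w i * B i * B i := by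
    rw [Finset.mul_sum, ← Finset.sum_add_distrib, ← Finset.sum_add_distrib]
    apply Finset.sum_congr rfl
    intro i _
    show w i * (A i + B i) * (A i + B i) = _
    ring
  simp only [wip, h, add_div, mul_div_assoc]

/-- Proposition 4, multivariate standard errors: for an `n×k`
matrix `W` of rank `k > 1`, if `σ_{y·zx} > 0`, `σ_{z·x} > 0`, `σ_{z·xw} > 0` (so that
`t_W²` is finite) and `df − k > 0`, then with `t_W := √(k·df/(df+1−k)·F_W)`,
`F_W := [(σ²_{z·x} − σ²_{z·xw})/k]/[σ²_{z·xw}/(df+1−k)]`,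
`ρ²_{yw·zx} := 1 − σ²_{y·zxw}/σ²_{y·zx}`, `V̂(b̂) := df⁻¹σ²_{y·zx}/σ²_{z·x}` and
`V̂(β̂) := (df−k)⁻¹σ²_{y·zxw}/σ²_{z·xw}`, the estimated variances satisfy
`V̂(β̂) = V̂(b̂)·[1 + (k + t_W²)/(df − k)]·(1 − ρ²_{yw·zx})`. -/
theorem stmt13 {n k : ℕ} (hk : 1 < k) (w : Fin n → ℝ) (hw : ∀ i, 0 < w i)
    (X : Set (Fin n → ℝ)) (hXfin : X.Finite)
    (h1 : (fun _ => (1 : ℝ)) ∈ Submodule.span ℝ X)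
    (Y Z : Fin n → ℝ) (W : Fin k → (Fin n → ℝ))
    (hWrank : LinearIndependent ℝ W)
    (Pzx Pzxw Pyzx Pyzxw : Fin n → ℝ)
    (hPzx : IsBlp w X Z Pzx)
    (hPzxw : IsBlp w (X ∪ Set.range W) Z Pzxw)
    (hPyzx : IsBlp w (insert Z X) Y Pyzx)
    (hPyzxw : IsBlp w (insert Z (X ∪ Set.range W)) Y Pyzxw)
    (hσyzx : 0 < wip w (Y - Pyzx) (Y - Pyzx))
    (hσzx : 0 < wip w (Z - Pzx) (Z - Pzx))
    (hσzxw : 0 < wip w (Z - Pzxw) (Z - Pzxw))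
    (hdfk : 0 < (n : ℝ) - (Module.finrank ℝ (Submodule.span ℝ X) : ℝ) - 1 - k) :
    let df : ℝ := (n : ℝ) - (Module.finrank ℝ (Submodule.span ℝ X) : ℝ) - 1
    let s2zx := wip w (Z - Pzx) (Z - Pzx)
    let s2zxw := wip w (Z - Pzxw) (Z - Pzxw)
    let FW := ((s2zx - s2zxw) / k) / (s2zxw / (df + 1 - k))
    let tW := Real.sqrt (k * df / (df + 1 - k) * FW)
    let rho2 := 1 - wip w (Y - Pyzxw) (Y - Pyzxw) / wip w (Y - Pyzx) (Y - Pyzx)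
    let Vb := (wip w (Y - Pyzx) (Y - Pyzx) / s2zx) / df
    let Vbeta := (wip w (Y - Pyzxw) (Y - Pyzxw) / s2zxw) / (df - k)
    Vbeta = Vb * (1 + (k + tW ^ 2) / (df - k)) * (1 - rho2) := by
  intro df s2zx s2zxw FW tW rho2 Vb Vbeta
  have hk2 : (2 : ℝ) ≤ (k : ℝ) := by exact_mod_cast hk
  have hkpos : (0 : ℝ) < (k : ℝ) := by linarith
  have hdfk' : 0 < df - (k : ℝ) := hdfk
  have hdf : (0 : ℝ) < df := by linarith
  have hdfk1 : (0 : ℝ) < df + 1 - k := by linarith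
  -- the nested residual inequality s2zxw ≤ s2zx
  have hDmem : Pzxw - Pzx ∈ Submodule.span ℝ (X ∪ Set.range W) :=
    Submodule.sub_mem _ hPzxw.1
      (Submodule.span_mono Set.subset_union_left hPzx.1)
  have hzero : wip w (Z - Pzxw) (Pzxw - Pzx) = 0 := hPzxw.2 _ hDmem
  have hsplit : Z - Pzx = (Z - Pzxw) + (Pzxw - Pzx) :=
    (sub_add_sub_cancel Z Pzxw Pzx).symm
  have hexp : s2zx = s2zxw + 2 * wip w (Z - Pzxw) (Pzxw - Pzx)
      + wip w (Pzxw - Pzx) (Pzxw - Pzx) := by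
    show wip w (Z - Pzx) (Z - Pzx) = _
    rw [hsplit, wip_add_expand]
  have hDD : 0 ≤ wip w (Pzxw - Pzx) (Pzxw - Pzx) := wip_self_nonneg w _ hw
  have hle : s2zxw ≤ s2zx := by rw [hexp, hzero]; linarith
  have hs2zx : 0 < s2zx := hσzx
  have hs2zxw : 0 < s2zxw := hσzxw
  have hs2y : 0 < wip w (Y - Pyzx) (Y - Pyzx) := hσyzx
  have hFW : 0 ≤ FW :=
    div_nonneg (div_nonneg (by linarith) hkpos.le) (div_nonneg hs2zxw.le hdfk1.le)
  have harg : 0 ≤ (k : ℝ) * df / (df + 1 - k) * FW :=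
    mul_nonneg (div_nonneg (mul_nonneg hkpos.le hdf.le) hdfk1.le) hFW
  have htw : tW ^ 2 = (k : ℝ) * df / (df + 1 - k) * FW := Real.sq_sqrt harg
  have hFWdef : FW = ((s2zx - s2zxw) / k) / (s2zxw / (df + 1 - k)) := rfl
  show (wip w (Y - Pyzxw) (Y - Pyzxw) / s2zxw) / (df - k)
      = ((wip w (Y - Pyzx) (Y - Pyzx) / s2zx) / df) * (1 + (k + tW ^ 2) / (df - k)) *
        (1 - (1 - wip w (Y - Pyzxw) (Y - Pyzxw) / wip w (Y - Pyzx) (Y - Pyzx)))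
  rw [htw, hFWdef]
  field_simp
  ring
end

section
/- Let d be real with d > k ≥ 1, q > 0, T ≥ 0, and set f_k(t,d) := √(1 + (k + t²)/(d − k)). Then: (a) for every t with |t| ≤ T and every ρ with |ρ| ≤ 1, the interval [−tρ − q f_k(t,d)√(1−ρ²), −tρ + q f_k(t,d)√(1−ρ²)] is contained in [−√(T² + q² f_k(T,d)²), √(T² + q² f_k(T,d)²)]; and (b) if additionally T > 0 and 0 < R < T²/(T² + q² f_k(T,d)²), then for every t with |t| ≤ T and every ρ with ρ² ≤ R that interval is contained in [−(T√R + q f_k(T,d)√(1−R)), T√R + q f_k(T,d)√(1−R)]. -/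
lemma key1 (a b ρ s : ℝ) (ha : 0 ≤ a) (hb : 0 ≤ b) (hs : 0 ≤ s)
    (h : ρ ^ 2 + s ^ 2 = 1) : a * ρ + b * s ≤ Real.sqrt (a ^ 2 + b ^ 2) := by
  have h2 : (a * ρ + b * s) ^ 2 ≤ a ^ 2 + b ^ 2 := by
    nlinarith [sq_nonneg (a * s - b * ρ)]
  calc a * ρ + b * s ≤ |a * ρ + b * s| := le_abs_self _
    _ = Real.sqrt ((a * ρ + b * s) ^ 2) := (Real.sqrt_sq_eq_abs _).symm
    _ ≤ _ := Real.sqrt_le_sqrt h2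

lemma key2 (a b u r s w : ℝ) (ha : 0 ≤ a) (hb : 0 ≤ b) (hu : 0 ≤ u)
    (hw : 0 < w) (hs : 0 ≤ s) (hur : u ≤ r)
    (hsw : s ^ 2 - w ^ 2 = r ^ 2 - u ^ 2) (hwr : b * r ≤ a * w) :
    a * u + b * s ≤ a * r + b * w := by
  have hws : w ≤ s := by nlinarith
  have h1 : b * (r + u) ≤ a * (s + w) := by nlinarith
  have h2 : a * (r - u) * (s + w) ≥ b * (s - w) * (s + w) := by nlinarith
  have hsw0 : 0 < s + w := by linarith
  nlinarith



/-- Proposition on sensitivity intervals for rank `k`: for real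
`d > k ≥ 1`, `q > 0`, `T ≥ 0` and `f_k(t,d) := √(1 + (k + t²)/(d − k))`:
(a) for `|t| ≤ T`, `|ρ| ≤ 1` the interval
`[−tρ − q f_k(t,d)√(1−ρ²), −tρ + q f_k(t,d)√(1−ρ²)]` is contained in
`[−√(T² + q² f_k(T,d)²), √(T² + q² f_k(T,d)²)]`; and (b) if moreover `T > 0` and
`0 < R < T²/(T² + q² f_k(T,d)²)`, then for `|t| ≤ T`, `ρ² ≤ R` that interval is
contained in `[−(T√R + q f_k(T,d)√(1−R)), T√R + q f_k(T,d)√(1−R)]`. -/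
theorem stmt14 (d q T k : ℝ) (hk : 1 ≤ k) (hd : k < d) (hq : 0 < q) (hT : 0 ≤ T) :
    let f : ℝ → ℝ := fun t => Real.sqrt (1 + (k + t ^ 2) / (d - k))
    (∀ t ρ : ℝ, |t| ≤ T → |ρ| ≤ 1 →
      Set.Icc (-t * ρ - q * f t * Real.sqrt (1 - ρ ^ 2))
          (-t * ρ + q * f t * Real.sqrt (1 - ρ ^ 2))
        ⊆ Set.Icc (-Real.sqrt (T ^ 2 + q ^ 2 * f T ^ 2))
            (Real.sqrt (T ^ 2 + q ^ 2 * f T ^ 2))) ∧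
    (∀ R : ℝ, 0 < T → 0 < R → R < T ^ 2 / (T ^ 2 + q ^ 2 * f T ^ 2) →
      ∀ t ρ : ℝ, |t| ≤ T → ρ ^ 2 ≤ R →
        Set.Icc (-t * ρ - q * f t * Real.sqrt (1 - ρ ^ 2))
            (-t * ρ + q * f t * Real.sqrt (1 - ρ ^ 2))
          ⊆ Set.Icc (-(T * Real.sqrt R + q * f T * Real.sqrt (1 - R)))
              (T * Real.sqrt R + q * f T * Real.sqrt (1 - R))) := by
  intro f
  have hdk : 0 < d - k := by linarith
  have hfT1 : 1 ≤ f T := by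
    apply Real.one_le_sqrt.mpr
    have : 0 ≤ (k + T ^ 2) / (d - k) := by positivity
    linarith
  have hfT0 : 0 < f T := by linarith
  -- monotonicity of f
  have hmono : ∀ t : ℝ, |t| ≤ T → f t ≤ f T := by
    intro t ht
    have ht2 : t ^ 2 ≤ T ^ 2 := by
      have := abs_le.mp ht
      nlinarith
    apply Real.sqrt_le_sqrt
    have h2 : (k + t ^ 2) / (d - k) ≤ (k + T ^ 2) / (d - k) := by
      gcongr
    linarith
  have hfpos : ∀ t : ℝ, 0 ≤ f t := fun t => Real.sqrt_nonneg _
  constructor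
  · -- part (a)
    intro t ρ ht hρ
    set s := Real.sqrt (1 - ρ ^ 2) with hs_def
    have hρ2 : ρ ^ 2 ≤ 1 := by
      have := abs_le.mp hρ; nlinarith
    have hs0 : 0 ≤ s := Real.sqrt_nonneg _
    have hs2 : s ^ 2 = 1 - ρ ^ 2 := Real.sq_sqrt (by linarith)
    have hsum : |ρ| ^ 2 + s ^ 2 = 1 := by rw [sq_abs]; linarith
    have hbound : |t| * |ρ| + q * f t * s ≤ Real.sqrt (T ^ 2 + q ^ 2 * f T ^ 2) := by
      have h1 : |t| * |ρ| + q * f t * s ≤ T * |ρ| + (q * f T) * s := by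
        have := hmono t ht
        have h3 : q * f t * s ≤ q * f T * s := by
          apply mul_le_mul_of_nonneg_right ?_ hs0
          exact mul_le_mul_of_nonneg_left this (le_of_lt hq)
        have h4 : |t| * |ρ| ≤ T * |ρ| :=
          mul_le_mul_of_nonneg_right ht (abs_nonneg _)
        linarith
      have h2 := key1 T (q * f T) |ρ| s hT (by positivity) hs0 hsum
      have heq : T ^ 2 + (q * f T) ^ 2 = T ^ 2 + q ^ 2 * f T ^ 2 := by ring
      rw [heq] at h2
      linarith
    apply Set.Icc_subset_Icc
    · have : t * ρ ≤ |t| * |ρ| := by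
        calc t * ρ ≤ |t * ρ| := le_abs_self _
          _ = |t| * |ρ| := abs_mul _ _
      linarith
    · have : -t * ρ ≤ |t| * |ρ| := by
        calc -t * ρ = -(t * ρ) := by ring
          _ ≤ |t * ρ| := neg_le_abs _
          _ = |t| * |ρ| := abs_mul _ _
      linarith
  · -- part (b)
    intro R hT0 hR0 hR1 t ρ ht hρ
    set s := Real.sqrt (1 - ρ ^ 2) with hs_def
    set r := Real.sqrt R with hr_def
    set w := Real.sqrt (1 - R) with hw_def
    have hD : 0 < T ^ 2 + q ^ 2 * f T ^ 2 := by positivity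
    have hRD : R * (T ^ 2 + q ^ 2 * f T ^ 2) < T ^ 2 := (lt_div_iff₀ hD).mp hR1
    have hR1' : R < 1 := by nlinarith [sq_nonneg (q * f T), hq.le, hfT1]
    have hρ2 : ρ ^ 2 ≤ R := hρ
    have hs0 : 0 ≤ s := Real.sqrt_nonneg _
    have hs2 : s ^ 2 = 1 - ρ ^ 2 := Real.sq_sqrt (by nlinarith)
    have hr2 : r ^ 2 = R := Real.sq_sqrt hR0.le
    have hw2 : w ^ 2 = 1 - R := Real.sq_sqrt (by linarith)
    have hw0 : 0 < w := Real.sqrt_pos.mpr (by linarith)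
    have hur : |ρ| ≤ r := by
      rw [hr_def, ← Real.sqrt_sq_eq_abs]
      exact Real.sqrt_le_sqrt hρ2
    have hwr : (q * f T) * r ≤ T * w := by
      have hsq : ((q * f T) * r) ^ 2 ≤ (T * w) ^ 2 := by
        have : ((q * f T) * r) ^ 2 = q ^ 2 * f T ^ 2 * R := by rw [mul_pow, hr2]; ring
        rw [this, mul_pow, hw2]; nlinarith
      have h1 : 0 ≤ (q * f T) * r := by positivity
      have h2 : 0 ≤ T * w := by positivity
      nlinarith
    have hkey := key2 T (q * f T) |ρ| r s w hT (by positivity) (abs_nonneg _)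
      hw0 hs0 hur (by rw [hs2, hw2, hr2, sq_abs]; ring) hwr
    have hbound : |t| * |ρ| + q * f t * s ≤ T * r + q * f T * w := by
      have hm := hmono t ht
      have h3 : q * f t * s ≤ q * f T * s :=
        mul_le_mul_of_nonneg_right (mul_le_mul_of_nonneg_left hm hq.le) hs0
      have h4 : |t| * |ρ| ≤ T * |ρ| := mul_le_mul_of_nonneg_right ht (abs_nonneg _)
      have : T * |ρ| + (q * f T) * s ≤ T * r + (q * f T) * w := hkey
      linarith
    apply Set.Icc_subset_Icc
    · have : t * ρ ≤ |t| * |ρ| := by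
        calc t * ρ ≤ |t * ρ| := le_abs_self _
          _ = |t| * |ρ| := abs_mul _ _
      linarith
    · have : -t * ρ ≤ |t| * |ρ| := by
        calc -t * ρ = -(t * ρ) := by ring
          _ ≤ |t * ρ| := neg_le_abs _
          _ = |t| * |ρ| := abs_mul _ _
      linarith
end
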